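/- Let A, B : ℝ → matrices be differentiable trajectories satisfying the gradient flow τ A'(t) = G(t) B(t) − λ A(t) and τ B'(t) = G(t)ᵀ A(t) − λ B(t), where G(t) is an arbitrary continuous matrix-valued function and λ, τ > 0. Then A(t)ᵀA(t) − B(t)ᵀB(t) = e^{−2λt/τ} (A(0)ᵀA(0) − B(0)ᵀB(0)) for all t ≥ 0. -/

import Mathlib

open Matrix

/-- Squared Frobenius norm of a real matrix. -/
noncomputable def frobSq {m n : ℕ} (A : Matrix (Fin m) (Fin n) ℝ) : ℝ :=
  ∑ i, ∑ j, (A i j) ^ 2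

/-- Frobenius norm. -/
noncomputable def frobNorm {m n : ℕ} (A : Matrix (Fin m) (Fin n) ℝ) : ℝ :=
  Real.sqrt (frobSq A)

lemma wwT_posSemidef {m n : ℕ} (W : Matrix (Fin m) (Fin n) ℝ) :
    (W * Wᵀ).PosSemidef := by
  simpa [Matrix.conjTranspose_eq_transpose_of_trivial] using
    W.posSemidef_self_mul_conjTranspose

/-- Nuclear norm: trace of the PSD square root of `W * Wᵀ`. -/
noncomputable def nuclearNorm {m n : ℕ} (W : Matrix (Fin m) (Fin n) ℝ) : ℝ :=
  ((wwT_posSemidef W).1.eigenvectorUnitary.1 *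
    diagonal ((fun x : ℝ => (x : ℝ)) ∘ (√·) ∘ (wwT_posSemidef W).1.eigenvalues) *
    (star (wwT_posSemidef W).1.eigenvectorUnitary : Matrix (Fin m) (Fin m) ℝ)).trace

/-! Differentiating `Q = AᵀA - BᵀB` along the flow, the terms `BᵀGᵀA` and `AᵀGB` contributed by `G`
cancel, leaving `τ Q' = -2λ Q`. Each entry of `Q` therefore solves the linear scalar equation
`q' = (-2λ/τ) q`, whose solutions are `q(t) = e^{-2λt/τ} q(0)`. -/

theorem eq_exp_mul_smul_of_hasDerivAt {E : Type*} [NormedAddCommGroup E] [NormedSpace ℝ E]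
    {f : ℝ → E} {c : ℝ} (hf : ∀ t, HasDerivAt f (c • f t) t) (t : ℝ) :
    f t = Real.exp (c * t) • f 0 := by
  have hderiv : ∀ s, HasDerivAt (fun u => Real.exp (-(c * u)) • f u) 0 s := by
    intro s
    have hexp : HasDerivAt (fun u => Real.exp (-(c * u))) (Real.exp (-(c * s)) * -c) s := by
      simpa using ((hasDerivAt_id s).const_mul c).neg.exp
    simpa [smul_smul, mul_comm] using hexp.fun_smul (hf s)
  have hconst := is_const_of_deriv_eq_zero (fun s => (hderiv s).differentiableAt)
    (fun s => (hderiv s).deriv) t 0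
  rwa [mul_zero, neg_zero, Real.exp_zero, one_smul, Real.exp_neg,
    inv_smul_eq_iff₀ (Real.exp_pos _).ne'] at hconst

theorem hasDerivAt_mul_apply {𝕜 ι κ μ : Type*} [NontriviallyNormedField 𝕜] [Fintype κ]
    {A : 𝕜 → Matrix ι κ 𝕜} {B : 𝕜 → Matrix κ μ 𝕜} {A' : Matrix ι κ 𝕜} {B' : Matrix κ μ 𝕜}
    {t : 𝕜} (hA : ∀ i k, HasDerivAt (fun s => A s i k) (A' i k) t)
    (hB : ∀ k j, HasDerivAt (fun s => B s k j) (B' k j) t) (i : ι) (j : μ) :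
    HasDerivAt (fun s => (A s * B s) i j) ((A' * B t + A t * B') i j) t := by
  simp only [mul_apply, Matrix.add_apply, ← Finset.sum_add_distrib]
  exact HasDerivAt.fun_sum fun k _ => (hA i k).fun_mul (hB k j)

theorem transpose_mul_self_sub_deriv_eq_smul_of_flow {m n r R : Type*} [Fintype m] [Fintype n]
    [Field R]
    {τ lam : R} (hτ : τ ≠ 0) {A A' : Matrix m r R} {B B' : Matrix n r R} (G : Matrix m n R)
    (hA : τ • A' = G * B - lam • A) (hB : τ • B' = Gᵀ * A - lam • B) :
    A'ᵀ * A + Aᵀ * A' - (B'ᵀ * B + Bᵀ * B') = (-(2 * lam) / τ) • (Aᵀ * A - Bᵀ * B) := by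
  refine smul_right_injective _ hτ ?_
  dsimp only
  have hscale : τ • (A'ᵀ * A + Aᵀ * A' - (B'ᵀ * B + Bᵀ * B')) =
      (τ • A')ᵀ * A + Aᵀ * (τ • A') - ((τ • B')ᵀ * B + Bᵀ * (τ • B')) := by
    simp only [transpose_smul, smul_mul, Matrix.mul_smul, smul_add, smul_sub]
  -- after substituting the flow, `G` enters only through `BᵀGᵀA` and `AᵀGB`, each with both signs
  rw [hscale, hA, hB, smul_smul, mul_div_cancel₀ _ hτ]
  simp only [transpose_sub, transpose_mul, transpose_smul, transpose_transpose, Matrix.sub_mul,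
    Matrix.mul_sub, smul_mul, Matrix.mul_smul, Matrix.mul_assoc]
  module

theorem gradient_flow_balancedness_general {m n r : ℕ} (τ lam : ℝ) (hτ : 0 < τ)
    (A A' : ℝ → Matrix (Fin m) (Fin r) ℝ)
    (B B' : ℝ → Matrix (Fin n) (Fin r) ℝ)
    (G : ℝ → Matrix (Fin m) (Fin n) ℝ)
    (hderivA : ∀ t i j, HasDerivAt (fun s => A s i j) (A' t i j) t)
    (hderivB : ∀ t i j, HasDerivAt (fun s => B s i j) (B' t i j) t)
    (hflowA : ∀ t, τ • A' t = G t * B t - lam • A t)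
    (hflowB : ∀ t, τ • B' t = (G t)ᵀ * A t - lam • B t) :
    ∀ t, 0 ≤ t →
      (A t)ᵀ * A t - (B t)ᵀ * B t =
        Real.exp (-(2 * lam * t) / τ) • ((A 0)ᵀ * A 0 - (B 0)ᵀ * B 0) := by
  intro t _
  ext i j
  have hQ : ∀ s, HasDerivAt (fun u => ((A u)ᵀ * A u - (B u)ᵀ * B u) i j)
      ((-(2 * lam) / τ) • ((A s)ᵀ * A s - (B s)ᵀ * B s) i j) s := by
    intro s
    rw [← Matrix.smul_apply,
      ← transpose_mul_self_sub_deriv_eq_smul_of_flow hτ.ne' (G s) (hflowA s) (hflowB s)]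
    exact (hasDerivAt_mul_apply (fun i k => hderivA s k i) (hderivA s) i j).sub
      (hasDerivAt_mul_apply (fun i k => hderivB s k i) (hderivB s) i j)
  rw [eq_exp_mul_smul_of_hasDerivAt hQ t, Matrix.smul_apply]
  congr 2
  ring

/-- under gradient flow `τA' = GB − λA`, `τB' = GᵀA − λB` with
`G` an arbitrary continuous matrix-valued function and `λ, τ > 0`, the imbalance
`AᵀA − BᵀB` decays exactly as `e^{−2λt/τ}` times its initial value. -/
theorem gradient_flow_balancedness {m n r : ℕ} (τ lam : ℝ) (hτ : 0 < τ) (hlam : 0 < lam)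
    (A A' : ℝ → Matrix (Fin m) (Fin r) ℝ)
    (B B' : ℝ → Matrix (Fin n) (Fin r) ℝ)
    (G : ℝ → Matrix (Fin m) (Fin n) ℝ)
    (hG : ∀ i j, Continuous fun t => G t i j)
    (hderivA : ∀ t i j, HasDerivAt (fun s => A s i j) (A' t i j) t)
    (hderivB : ∀ t i j, HasDerivAt (fun s => B s i j) (B' t i j) t)
    (hflowA : ∀ t, τ • A' t = G t * B t - lam • A t)
    (hflowB : ∀ t, τ • B' t = (G t)ᵀ * A t - lam • B t) :
    ∀ t, 0 ≤ t →
      (A t)ᵀ * A t - (B t)ᵀ * B t =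
        Real.exp (-(2 * lam * t) / τ) • ((A 0)ᵀ * A 0 - (B 0)ᵀ * B 0) :=
  gradient_flow_balancedness_general τ lam hτ A A' B B' G hderivA hderivB hflowA hflowB
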